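/- Let μ₀, μ₁ ∈ ℝ, σ₀, σ₁ > 0, ε > 0 and t ∈ (0,1). Starting from ν₀ ∈ ℝ, s₀ > 0, ρ₀ ∈ (-1,1), define for k ≥ 0 one discrete-time IPMF step (with N = 1 intermediate point at time t) as follows: (1) ρ̃ₖ = U(ρₖ; σ₀, sₖ), where U(ρ; σ, σ') = ((1-t)σ + tρσ')(tσ' + (1-t)ρσ)/((1-t)²σ² + 2t(1-t)ρσσ' + t²σ'² + t(1-t)ε); (2) (s'ₖ)² = σ₀²(1 - ρ̃ₖ²(1 - σ₁²/sₖ²)), ρ'ₖ = σ₀σ₁ρ̃ₖ/(sₖ s'ₖ), ν'ₖ = μ₀ - (σ₀/sₖ)ρ̃ₖ(νₖ - μ₁); (3) ρ̂ₖ = U(ρ'ₖ; s'ₖ, σ₁); (4) s²_{k+1} = σ₁²(1 - ρ̂ₖ²(1 - σ₀²/(s'ₖ)²)), ρ_{k+1} = σ₀σ₁ρ̂ₖ/(s'ₖ s_{k+1}), ν_{k+1} = μ₁ - (σ₁/s'ₖ)ρ̂ₖ(ν'ₖ - μ₀). Then the recursion is well defined (sₖ, s'ₖ > 0 and ρₖ,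 ρ̃ₖ, ρ'ₖ, ρ̂ₖ ∈ (-1,1) for all k), and there exist constants α, β ∈ (0,1), depending only on μ₀, μ₁, σ₀, σ₁, ε, t and the initial values ν₀, s₀, ρ₀, such that for all k ≥ 0: |sₖ² - σ₁²| ≤ α^{2k}|s₀² - σ₁²|, |νₖ - μ₁| ≤ α^{k}|ν₀ - μ₁|, and |χₖ - 1/ε| ≤ β^{2k}|χ₀ - 1/ε|, where χₖ = Ξ(ρₖ, σ₀, sₖ). In particular, limₖ ρₖ = ρ* = (√(σ₀²σ₁² + ε²/4) - ε/2)/(σ₀σ₁), which is the correlation of the static Schrödinger Bridge solution between N(μ₀, σ₀²) and N(μ₁, σ₁²) with volatility ε. -/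

import Mathlib

/-- The optimality coefficient `Ξ(ρ, σ, σ') = ρ / (σσ'(1 - ρ²))`. -/
noncomputable def Xi (ρ σ σ' : ℝ) : ℝ := ρ / (σ * σ' * (1 - ρ ^ 2))

/-- One-point discrete-IMF correlation update
`U(ρ; σ, σ') = ((1-t)σ + tρσ')(tσ' + (1-t)ρσ) / ((1-t)²σ² + 2t(1-t)ρσσ' + t²σ'² + t(1-t)ε)`. -/
noncomputable def imfUpdate (σ σ' ε t ρ : ℝ) : ℝ :=
  (((1 - t) * σ + t * ρ * σ') * (t * σ' + (1 - t) * ρ * σ)) /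
    ((1 - t) ^ 2 * σ ^ 2 + 2 * t * (1 - t) * ρ * σ * σ' + t ^ 2 * σ' ^ 2 + t * (1 - t) * ε)

/-!
Each half of an IPMF step is an IMF update followed by an IPF projection. In the variables
`a = (1-t)σ`, `b = tσ'`, `c = t(1-t)ε` the IMF update reads
`ρ ↦ (a + ρb)(b + ρa) / (a² + 2ρab + b² + c)`; if `(a + b)² ≤ W` it maps `(-1, 1)` into
`[-W/(W+c), W/(W+c)]`, and it multiplies `Ξ - 1/ε` by `(1-ρ²)M / ((1-ρ²)M + cG)` with
`0 ≤ M ≤ W(W+c)` and `G ≥ c`, hence by at most `W(W+c) / (W(W+c) + c²)`. The IPF projection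
leaves `Ξ` unchanged. Over a full step `s² - σ₁²` is multiplied by `(ρ'ρ̂)²` and `ν - μ₁` by `ρ'ρ̂`,
so `s²` stays between `s₀²` and `σ₁²`; this bounds `W`, hence both rates, uniformly in `k`.
Finally `ρ = 2y / (1 + √(1 + 4y²))` with `y = σ₀ s Ξ` recovers the correlation continuously.
-/

open Filter Topology

noncomputable def scaledImfUpdate (a b c ρ : ℝ) : ℝ :=
  (a + ρ * b) * (b + ρ * a) / (a ^ 2 + 2 * ρ * a * b + b ^ 2 + c)

theorem imfUpdate_eq_scaledImfUpdate (σ σ' ε t ρ : ℝ) :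
    imfUpdate σ σ' ε t ρ = scaledImfUpdate ((1 - t) * σ) (t * σ') (t * (1 - t) * ε) ρ := by
  unfold imfUpdate scaledImfUpdate
  congr 1 <;> ring

theorem imfUpdate_comm (σ σ' ε t ρ : ℝ) : imfUpdate σ σ' ε t ρ = imfUpdate σ' σ ε (1 - t) ρ := by
  unfold imfUpdate
  congr 1 <;> ring

theorem div_add_le_div_add {X Y K d : ℝ} (hX : 0 ≤ X) (hXK : X ≤ K) (hd : 0 < d) (hdY : d ≤ Y) :
    X / (X + Y) ≤ K / (K + d) := by
  rw [div_le_div_iff₀ (by linarith) (by linarith)]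
  nlinarith

section scaledImfUpdate

variable {a b c ρ : ℝ}

theorem abs_mul_le_sq_add (ha : 0 ≤ a) (hb : 0 ≤ b) (hρ : |ρ| ≤ 1) :
    |(a + ρ * b) * (b + ρ * a)| ≤ a ^ 2 + 2 * ρ * a * b + b ^ 2 := by
  obtain ⟨hρl, hρu⟩ := abs_le.mp hρ
  have hab := mul_nonneg ha hb
  rw [abs_le]
  have h1p : (0 : ℝ) ≤ 1 + ρ := by linarith
  have h1m : (0 : ℝ) ≤ 1 - ρ := by linarith
  constructor
  · nlinarith [mul_nonneg (mul_nonneg h1p (by linarith : (0 : ℝ) ≤ 3 + ρ)) hab,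
      mul_nonneg h1p (sq_nonneg (a - b))]
  · nlinarith [mul_nonneg (mul_nonneg h1m h1p) hab, mul_nonneg h1m (sq_nonneg (a - b))]

theorem abs_scaledImfUpdate_le {W : ℝ} (ha : 0 ≤ a) (hb : 0 ≤ b) (hc : 0 < c) (hρ : |ρ| ≤ 1)
    (hW : (a + b) ^ 2 ≤ W) : |scaledImfUpdate a b c ρ| ≤ W / (W + c) := by
  set D₀ := a ^ 2 + 2 * ρ * a * b + b ^ 2
  have hN := abs_mul_le_sq_add ha hb hρ
  have hD₀ : 0 ≤ D₀ := (abs_nonneg _).trans hN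
  have hD₀W : D₀ ≤ W := by
    have := mul_nonneg ha hb
    nlinarith [(abs_le.mp hρ).2]
  rw [scaledImfUpdate, abs_div, abs_of_pos (by positivity : 0 < D₀ + c)]
  calc _ ≤ D₀ / (D₀ + c) := by gcongr
    _ ≤ W / (W + c) := by
      rw [div_le_div_iff₀ (by positivity) (by linarith)]
      nlinarith

theorem Xi_scaledImfUpdate_sub_inv (ha : 0 < a) (hb : 0 < b) (hc : 0 < c) (hρ : |ρ| < 1) :
    let E := a ^ 2 + b ^ 2 + ρ * a * b
    let M := E * (E + c) - (a * b) ^ 2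
    let G := (1 + ρ ^ 2) * E + 2 * ρ * a * b + c
    Xi (scaledImfUpdate a b c ρ) a b - 1 / c =
      (1 - ρ ^ 2) * M / ((1 - ρ ^ 2) * M + c * G) * (Xi ρ a b - 1 / c) := by
  intro E M G
  set N := (a + ρ * b) * (b + ρ * a)
  set D := a ^ 2 + 2 * ρ * a * b + b ^ 2 + c
  have hN := abs_mul_le_sq_add ha.le hb.le hρ.le
  have hDc : c ≤ D - |N| := by linarith
  have hD2N2 : c ^ 2 ≤ D ^ 2 - N ^ 2 := by
    rw [← sq_abs N]; nlinarith [abs_nonneg N]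
  have hDN : D ^ 2 - N ^ 2 = (1 - ρ ^ 2) * M + c * G := by ring
  have hkey : c * N * D - a * b * (D ^ 2 - N ^ 2) = M * (c * ρ - a * b * (1 - ρ ^ 2)) := by ring
  have hρ2 : 0 < 1 - ρ ^ 2 := by linarith [(sq_lt_one_iff_abs_lt_one ρ).mpr hρ]
  have hD : 0 < D := by linarith [abs_nonneg N]
  have hU : scaledImfUpdate a b c ρ = N / D := rfl
  have hD2N2' : D ^ 2 - N ^ 2 ≠ 0 := ((pow_pos hc 2).trans_le hD2N2).ne'
  have h1U : 1 - (N / D) ^ 2 = (D ^ 2 - N ^ 2) / D ^ 2 := by field_simp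
  rw [hU, ← hDN, Xi, Xi, h1U]
  field_simp
  linear_combination hkey

theorem abs_Xi_scaledImfUpdate_sub_inv_le {W : ℝ} (ha : 0 < a) (hb : 0 < b) (hc : 0 < c)
    (hρ : |ρ| < 1) (hW : (a + b) ^ 2 ≤ W) :
    |Xi (scaledImfUpdate a b c ρ) a b - 1 / c| ≤
      W * (W + c) / (W * (W + c) + c ^ 2) * |Xi ρ a b - 1 / c| := by
  obtain ⟨hρl, hρu⟩ := abs_lt.mp hρ
  have hab := mul_pos ha hb
  set E := a ^ 2 + b ^ 2 + ρ * a * b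
  set M := E * (E + c) - (a * b) ^ 2
  have hρ2 : 0 < 1 - ρ ^ 2 := by nlinarith
  have hE_sub : 0 ≤ E - a * b := by nlinarith [sq_nonneg (a - b)]
  have hE_add : 0 ≤ E + a * b := by nlinarith [sq_nonneg (a - b)]
  have hEW : E ≤ W := by nlinarith
  have hM : 0 ≤ M := by nlinarith [mul_nonneg hE_sub hE_add]
  have hMW : (1 - ρ ^ 2) * M ≤ W * (W + c) := by
    have : E * (E + c) ≤ W * (W + c) := by gcongr <;> linarith
    nlinarith [mul_nonneg (sq_nonneg ρ) hM]
  have hG : c ^ 2 ≤ c * ((1 + ρ ^ 2) * E + 2 * ρ * a * b + c) := by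
    have : 0 ≤ (1 + ρ ^ 2) * E + 2 * ρ * a * b := by
      nlinarith [mul_nonneg (by positivity : (0 : ℝ) ≤ 1 + ρ ^ 2) (sq_nonneg (a - b)),
        mul_nonneg (mul_nonneg (by linarith : (0 : ℝ) ≤ 1 + ρ)
          (by nlinarith : (0 : ℝ) ≤ 2 + ρ + ρ ^ 2)) hab.le]
    nlinarith
  have hX := mul_nonneg hρ2.le hM
  rw [Xi_scaledImfUpdate_sub_inv ha hb hc hρ, abs_mul,
    abs_of_nonneg (div_nonneg hX (by nlinarith))]
  exact mul_le_mul_of_nonneg_right (div_add_le_div_add hX hMW (by positivity) hG) (abs_nonneg _)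

end scaledImfUpdate

theorem Xi_sub_inv_eq_mul_scaled {ρ σ σ' ε t : ℝ} (ht : t * (1 - t) ≠ 0) :
    Xi ρ σ σ' - 1 / ε =
      t * (1 - t) * (Xi ρ ((1 - t) * σ) (t * σ') - 1 / (t * (1 - t) * ε)) := by
  have hscale :
      (1 - t) * σ * (t * σ') * (1 - ρ ^ 2) = t * (1 - t) * (σ * σ' * (1 - ρ ^ 2)) := by
    ring
  rw [Xi, Xi, hscale, mul_sub (t * (1 - t)), mul_div_assoc', mul_div_mul_left _ _ ht,
    mul_one_div, div_mul_cancel_left₀ ht, one_div]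

section imfUpdate

variable {σ σ' ε t ρ W : ℝ}

theorem abs_imfUpdate_le (hσ : 0 ≤ σ) (hσ' : 0 ≤ σ') (hε : 0 < ε) (ht : t ∈ Set.Ioo 0 1)
    (hρ : |ρ| ≤ 1) (hW : ((1 - t) * σ + t * σ') ^ 2 ≤ W) :
    |imfUpdate σ σ' ε t ρ| ≤ W / (W + t * (1 - t) * ε) := by
  obtain ⟨ht0, ht1⟩ := ht
  rw [imfUpdate_eq_scaledImfUpdate]
  exact abs_scaledImfUpdate_le (mul_nonneg (by linarith) hσ) (mul_nonneg ht0.le hσ')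
    (mul_pos (mul_pos ht0 (by linarith)) hε) hρ hW

theorem abs_Xi_imfUpdate_sub_inv_le (hσ : 0 < σ) (hσ' : 0 < σ') (hε : 0 < ε)
    (ht : t ∈ Set.Ioo 0 1) (hρ : |ρ| < 1) (hW : ((1 - t) * σ + t * σ') ^ 2 ≤ W) :
    |Xi (imfUpdate σ σ' ε t ρ) σ σ' - 1 / ε| ≤
      W * (W + t * (1 - t) * ε) / (W * (W + t * (1 - t) * ε) + (t * (1 - t) * ε) ^ 2) *
        |Xi ρ σ σ' - 1 / ε| := by
  obtain ⟨ht0, ht1⟩ := ht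
  have htt : 0 < t * (1 - t) := mul_pos ht0 (by linarith)
  rw [imfUpdate_eq_scaledImfUpdate, Xi_sub_inv_eq_mul_scaled (σ := σ) (σ' := σ') htt.ne',
    Xi_sub_inv_eq_mul_scaled (σ := σ) (σ' := σ') htt.ne', abs_mul (t * (1 - t)),
    abs_mul (t * (1 - t)), abs_of_pos htt, mul_left_comm]
  exact mul_le_mul_of_nonneg_left (abs_Xi_scaledImfUpdate_sub_inv_le
    (mul_pos (by linarith) hσ) (mul_pos ht0 hσ') (mul_pos htt hε) hρ hW) htt.le

end imfUpdate

theorem ipf_step_spec {σa σb s w ρ ρ' : ℝ} (hσa : 0 < σa) (hσb : 0 < σb) (hs : 0 < s)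
    (hw : 0 ≤ w) (hρ : |ρ| < 1) (hw2 : w ^ 2 = σa ^ 2 * (1 - ρ ^ 2 * (1 - σb ^ 2 / s ^ 2)))
    (hρ' : ρ' = σa * σb * ρ / (s * w)) :
    0 < w ∧ |ρ'| < 1 ∧ Xi ρ' σb w = Xi ρ σa s := by
  have hρ2 : 0 < 1 - ρ ^ 2 := by linarith [(sq_lt_one_iff_abs_lt_one ρ).mpr hρ]
  have hw2' : w ^ 2 = σa ^ 2 * (1 - ρ ^ 2) + (σa * σb * ρ / s) ^ 2 := by
    rw [hw2]; field_simp; ring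
  have hw_pos : 0 < w := by
    refine lt_of_le_of_ne hw fun hw0 => ?_
    rw [← hw0] at hw2'
    nlinarith [sq_nonneg (σa * σb * ρ / s), mul_pos (pow_pos hσa 2) hρ2]
  have h1ρ' : 1 - ρ' ^ 2 = σa ^ 2 * (1 - ρ ^ 2) / w ^ 2 := by
    have hsw : (s * w) ^ 2 - (σa * σb * ρ) ^ 2 = s ^ 2 * (σa ^ 2 * (1 - ρ ^ 2)) := by
      rw [mul_pow, hw2']; field_simp; ring
    rw [hρ', div_pow, one_sub_div (by positivity), hsw]
    field_simp
  have hρ'2 : ρ' ^ 2 < 1 := by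
    have : 0 < σa ^ 2 * (1 - ρ ^ 2) / w ^ 2 := by positivity
    linarith
  refine ⟨hw_pos, (sq_lt_one_iff_abs_lt_one ρ').mp hρ'2, ?_⟩
  rw [Xi, Xi, h1ρ', hρ']
  field_simp

theorem ipf_variance_sub {σa σb s w ρ : ℝ} (hs : s ≠ 0)
    (hw2 : w ^ 2 = σa ^ 2 * (1 - ρ ^ 2 * (1 - σb ^ 2 / s ^ 2))) :
    w ^ 2 - σa ^ 2 = (σa * ρ / s) ^ 2 * (σb ^ 2 - s ^ 2) := by
  rw [hw2]
  field_simp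
  ring

theorem sq_convex_comb_le {x y t : ℝ} (ht : t ∈ Set.Ioo 0 1) :
    ((1 - t) * x + t * y) ^ 2 ≤ x ^ 2 + y ^ 2 := by
  obtain ⟨ht0, ht1⟩ := ht
  nlinarith [mul_nonneg (mul_nonneg ht0.le (by linarith : (0 : ℝ) ≤ 1 - t)) (sq_nonneg (x - y)),
    mul_nonneg ht0.le (sq_nonneg x), mul_nonneg (by linarith : (0 : ℝ) ≤ 1 - t) (sq_nonneg y)]

theorem imf_ipf_step_spec {σa σb ε t W s ρ ρu w ρ' : ℝ} (hσa : 0 < σa) (hσb : 0 < σb)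
    (hε : 0 < ε) (ht : t ∈ Set.Ioo 0 1) (hs : 0 < s) (hρ : |ρ| < 1) (hw : 0 ≤ w)
    (hW : ((1 - t) * σa + t * s) ^ 2 ≤ W) (hρu : ρu = imfUpdate σa s ε t ρ)
    (hw2 : w ^ 2 = σa ^ 2 * (1 - ρu ^ 2 * (1 - σb ^ 2 / s ^ 2)))
    (hρ' : ρ' = σa * σb * ρu / (s * w)) :
    |ρu| ≤ W / (W + t * (1 - t) * ε) ∧ |ρu| < 1 ∧ 0 < w ∧ |ρ'| < 1 ∧
      |Xi ρ' σb w - 1 / ε| ≤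
        W * (W + t * (1 - t) * ε) / (W * (W + t * (1 - t) * ε) + (t * (1 - t) * ε) ^ 2) *
          |Xi ρ σa s - 1 / ε| := by
  have hc : 0 < t * (1 - t) * ε := mul_pos (mul_pos ht.1 (by linarith [ht.2])) hε
  have hρu_le : |ρu| ≤ W / (W + t * (1 - t) * ε) :=
    hρu ▸ abs_imfUpdate_le hσa.le hs.le hε ht hρ.le hW
  have hρu_lt : |ρu| < 1 := hρu_le.trans_lt <|
    (div_lt_one (by nlinarith [sq_nonneg ((1 - t) * σa + t * s)])).mpr (by linarith)
  obtain ⟨hw_pos, hρ'_lt, hXi⟩ := ipf_step_spec hσa hσb hs hw hρu_lt hw2 hρ'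
  refine ⟨hρu_le, hρu_lt, hw_pos, hρ'_lt, ?_⟩
  rw [hXi, hρu]
  exact abs_Xi_imfUpdate_sub_inv_le hσa hs hε ht hρ hW

theorem ipmf_step_spec {σ₀ σ₁ ε t L A W s ρ ρt s' ρ' ρh s₁ ρ₁ : ℝ} (hσ₀ : 0 < σ₀)
    (hσ₁ : 0 < σ₁) (hε : 0 < ε) (ht : t ∈ Set.Ioo 0 1) (hL : 0 < L)
    (hσ₁I : σ₁ ^ 2 ∈ Set.Icc L A) (hW : σ₀ ^ 2 + A + (σ₀ * σ₁) ^ 2 / L + σ₁ ^ 2 ≤ W)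
    (hs : 0 < s) (hsI : s ^ 2 ∈ Set.Icc L A) (hρ : |ρ| < 1) (hs'_nonneg : 0 ≤ s')
    (hs₁_nonneg : 0 ≤ s₁) (hρt : ρt = imfUpdate σ₀ s ε t ρ)
    (hs' : s' ^ 2 = σ₀ ^ 2 * (1 - ρt ^ 2 * (1 - σ₁ ^ 2 / s ^ 2)))
    (hρ' : ρ' = σ₀ * σ₁ * ρt / (s * s'))
    (hρh : ρh = imfUpdate s' σ₁ ε t ρ')
    (hs₁ : s₁ ^ 2 = σ₁ ^ 2 * (1 - ρh ^ 2 * (1 - σ₀ ^ 2 / s' ^ 2)))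
    (hρ₁ : ρ₁ = σ₀ * σ₁ * ρh / (s' * s₁)) :
    (0 < s' ∧ |ρt| < 1 ∧ |ρ'| < 1 ∧ |ρh| < 1 ∧ 0 < s₁ ∧ |ρ₁| < 1 ∧ s₁ ^ 2 ∈ Set.Icc L A) ∧
      |ρ' * ρh| ≤ W / (W + t * (1 - t) * ε) ∧
      s₁ ^ 2 - σ₁ ^ 2 = (ρ' * ρh) ^ 2 * (s ^ 2 - σ₁ ^ 2) ∧
      |Xi ρ₁ σ₀ s₁ - 1 / ε| ≤
        (W * (W + t * (1 - t) * ε) / (W * (W + t * (1 - t) * ε) + (t * (1 - t) * ε) ^ 2)) ^ 2 *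
          |Xi ρ σ₀ s - 1 / ε| := by
  have ht' : 1 - t ∈ Set.Ioo 0 1 := ⟨by linarith [ht.2], by linarith [ht.1]⟩
  have hA : 0 ≤ A := (sq_nonneg σ₁).trans hσ₁I.2
  -- `W` dominates `((1-t)σ₀ + ts)²` and `((1-t)s' + tσ₁)²` for all `s²` in the window
  have hW₀ : σ₀ ^ 2 + s ^ 2 ≤ W := by
    linarith [hsI.2, (by positivity : 0 ≤ (σ₀ * σ₁) ^ 2 / L), sq_nonneg σ₁]
  have hW₁ : σ₀ ^ 2 + (σ₀ * σ₁ / s) ^ 2 + σ₁ ^ 2 ≤ W := by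
    have : (σ₀ * σ₁ / s) ^ 2 ≤ (σ₀ * σ₁) ^ 2 / L := by
      rw [div_pow]; exact div_le_div_of_nonneg_left (by positivity) hL hsI.1
    linarith
  obtain ⟨-, hρt_lt, hs'_pos, hρ'_lt, hXi₀⟩ := imf_ipf_step_spec hσ₀ hσ₁ hε ht hs hρ hs'_nonneg
    ((sq_convex_comb_le ht).trans hW₀) hρt hs' hρ'
  have e₀ := ipf_variance_sub hs.ne' hs'
  have hs'_le : s' ^ 2 ≤ σ₀ ^ 2 + (σ₀ * σ₁ / s) ^ 2 := by
    have hρt2 : ρt ^ 2 ≤ 1 := (sq_le_one_iff_abs_le_one ρt).mpr hρt_lt.le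
    have : (σ₀ * ρt / s) ^ 2 * σ₁ ^ 2 = (σ₀ * σ₁ / s) ^ 2 * ρt ^ 2 := by ring
    nlinarith [mul_nonneg (sq_nonneg (σ₀ * ρt / s)) (sq_nonneg s),
      mul_le_mul_of_nonneg_left hρt2 (sq_nonneg (σ₀ * σ₁ / s))]
  -- the second IMF step is the first one with the marginals, and `t` and `1 - t`, exchanged
  obtain ⟨hρh_le, hρh_lt, hs₁_pos, hρ₁_lt, hXi₁⟩ := imf_ipf_step_spec (W := W) hσ₁ hσ₀ hε ht'
    hs'_pos hρ'_lt hs₁_nonneg ((sq_convex_comb_le ht').trans (by linarith))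
    (hρh.trans (imfUpdate_comm _ _ _ _ _)) hs₁ (hρ₁.trans (by ring))
  rw [show (1 - t) * (1 - (1 - t)) = t * (1 - t) by ring] at hρh_le hXi₁
  have hρρ : |ρ' * ρh| ≤ W / (W + t * (1 - t) * ε) := by
    rw [abs_mul]
    exact (mul_le_of_le_one_left (abs_nonneg _) hρ'_lt.le).trans hρh_le
  have hrec : s₁ ^ 2 - σ₁ ^ 2 = (ρ' * ρh) ^ 2 * (s ^ 2 - σ₁ ^ 2) := by
    rw [ipf_variance_sub hs'_pos.ne' hs₁, hρ']
    linear_combination (-(σ₁ * ρh / s') ^ 2) * e₀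
  have hs₁I : s₁ ^ 2 ∈ Set.Icc L A := by
    rw [← sub_add_cancel (s₁ ^ 2) (σ₁ ^ 2), hrec, add_comm, ← smul_eq_mul]
    refine (convex_Icc L A).add_smul_sub_mem hσ₁I hsI ⟨sq_nonneg _, ?_⟩
    rw [sq_le_one_iff_abs_le_one, abs_mul]
    exact mul_le_one₀ hρ'_lt.le (abs_nonneg _) hρh_lt.le
  set β := W * (W + t * (1 - t) * ε) / (W * (W + t * (1 - t) * ε) + (t * (1 - t) * ε) ^ 2)
  have hβ : 0 ≤ β := by
    have := (mul_pos (mul_pos ht.1 ht'.1) hε).le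
    have := le_trans (by positivity) hW₀
    positivity
  refine ⟨⟨hs'_pos, hρt_lt, hρ'_lt, hρh_lt, hs₁_pos, hρ₁_lt, hs₁I⟩, hρρ, hrec, ?_⟩
  calc |Xi ρ₁ σ₀ s₁ - 1 / ε| ≤ β * |Xi ρ' σ₁ s' - 1 / ε| := hXi₁
    _ ≤ β * (β * |Xi ρ σ₀ s - 1 / ε|) := by gcongr
    _ = β ^ 2 * |Xi ρ σ₀ s - 1 / ε| := by ring

theorem tendsto_of_abs_sub_le_pow_mul {x : ℕ → ℝ} {a q C : ℝ} (hq₀ : 0 ≤ q) (hq₁ : q < 1)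
    (h : ∀ k, |x k - a| ≤ q ^ k * C) : Tendsto x atTop (𝓝 a) := by
  rw [tendsto_iff_norm_sub_tendsto_zero]
  refine squeeze_zero (fun k => norm_nonneg _) h ?_
  simpa using (tendsto_pow_atTop_nhds_zero_of_lt_one hq₀ hq₁).mul_const C

theorem mul_mul_Xi {ρ σ σ' : ℝ} (h : σ * σ' ≠ 0) : σ * σ' * Xi ρ σ σ' = ρ / (1 - ρ ^ 2) := by
  rw [Xi, mul_div_assoc', mul_div_mul_left _ _ h]

theorem eq_two_mul_div_one_add_sqrt {ρ : ℝ} (hρ : |ρ| < 1) :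
    ρ = 2 * (ρ / (1 - ρ ^ 2)) / (1 + √(1 + 4 * (ρ / (1 - ρ ^ 2)) ^ 2)) := by
  have hρ2 : 0 < 1 - ρ ^ 2 := by linarith [(sq_lt_one_iff_abs_lt_one ρ).mpr hρ]
  have hsq : 1 + 4 * (ρ / (1 - ρ ^ 2)) ^ 2 = ((1 + ρ ^ 2) / (1 - ρ ^ 2)) ^ 2 := by
    field_simp
    ring
  rw [hsq, Real.sqrt_sq (by positivity)]
  field_simp
  ring

theorem two_mul_div_one_add_sqrt_eq {σ σ' ε : ℝ} (hσ : σ * σ' ≠ 0) (hε : 0 < ε) :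
    2 * (σ * σ' * (1 / ε)) / (1 + √(1 + 4 * (σ * σ' * (1 / ε)) ^ 2)) =
      (√(σ ^ 2 * σ' ^ 2 + ε ^ 2 / 4) - ε / 2) / (σ * σ') := by
  set S := √(σ ^ 2 * σ' ^ 2 + ε ^ 2 / 4)
  have hS : S ^ 2 = σ ^ 2 * σ' ^ 2 + ε ^ 2 / 4 := Real.sq_sqrt (by positivity)
  have hS₀ : 0 ≤ S := Real.sqrt_nonneg _
  have hsqrt : √(1 + 4 * (σ * σ' * (1 / ε)) ^ 2) = 2 * S / ε := by
    rw [← Real.sqrt_sq (by positivity : 0 ≤ 2 * S / ε)]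
    congr 1
    field_simp
    linear_combination (-4) * hS
  rw [hsqrt, div_eq_div_iff (by positivity) hσ]
  field_simp
  linear_combination (-4) * hS

theorem tendsto_corr_of_tendsto_Xi {ρ s : ℕ → ℝ} {σ σ' ε : ℝ} (hσ : σ ≠ 0) (hσ' : σ' ≠ 0)
    (hε : 0 < ε) (hs : ∀ k, s k ≠ 0) (hρ : ∀ k, |ρ k| < 1) (hs_lim : Tendsto s atTop (𝓝 σ'))
    (hXi_lim : Tendsto (fun k => Xi (ρ k) σ (s k)) atTop (𝓝 (1 / ε))) :
    Tendsto ρ atTop (𝓝 ((√(σ ^ 2 * σ' ^ 2 + ε ^ 2 / 4) - ε / 2) / (σ * σ'))) := by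
  have hg : Continuous fun y : ℝ => 2 * y / (1 + √(1 + 4 * y ^ 2)) :=
    (by fun_prop : Continuous fun y : ℝ => 2 * y).div (by fun_prop) fun y => by positivity
  rw [← two_mul_div_one_add_sqrt_eq (mul_ne_zero hσ hσ') hε]
  refine ((hg.tendsto _).comp ((tendsto_const_nhds.mul hs_lim).mul hXi_lim)).congr fun k => ?_
  dsimp only [Function.comp_apply]
  rw [mul_mul_Xi (mul_ne_zero hσ (hs k))]
  exact (eq_two_mul_div_one_add_sqrt (hρ k)).symm

/-- Quantitative convergence of the discrete-time IPMF procedure (with one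
intermediate time point `t`) between 1D Gaussians `N(μ₀, σ₀²)` and `N(μ₁, σ₁²)` with
volatility `ε`. Each IPMF step consists of an IMF correlation update, an IPF projection
onto the final marginal, a second IMF update, and an IPF projection onto the starting
marginal, with the stated explicit formulas. Then the recursion is well defined
(`sₖ, s'ₖ > 0` and all correlations lie in `(-1,1)`), and there exist `α, β ∈ (0,1)` such
that `|sₖ² - σ₁²| ≤ α^(2k)|s₀² - σ₁²|`, `|νₖ - μ₁| ≤ α^k|ν₀ - μ₁|` and
`|χₖ - 1/ε| ≤ β^(2k)|χ₀ - 1/ε|` where `χₖ = Ξ(ρₖ, σ₀, sₖ)`; in particular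
`ρₖ → ρ* = (√(σ₀²σ₁² + ε²/4) - ε/2)/(σ₀σ₁)`, the correlation of the static Schrödinger
Bridge solution. -/
theorem IPMF_convergence_1D_gaussians (μ₀ μ₁ σ₀ σ₁ ε t : ℝ)
    (hσ₀ : 0 < σ₀) (hσ₁ : 0 < σ₁) (hε : 0 < ε) (ht : t ∈ Set.Ioo (0 : ℝ) 1)
    (ρ ρt ρ' ρh s s' ν ν' : ℕ → ℝ)
    (hs0 : 0 < s 0) (hρ0 : ρ 0 ∈ Set.Ioo (-1 : ℝ) 1)
    (hsnn : ∀ k, 0 ≤ s k) (hs'nn : ∀ k, 0 ≤ s' k)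
    -- (1) first IMF step
    (hρt : ∀ k, ρt k = imfUpdate σ₀ (s k) ε t (ρ k))
    -- (2) IPF projection of the final marginal onto N(μ₁, σ₁²)
    (hs' : ∀ k, (s' k) ^ 2 = σ₀ ^ 2 * (1 - (ρt k) ^ 2 * (1 - σ₁ ^ 2 / (s k) ^ 2)))
    (hρ' : ∀ k, ρ' k = σ₀ * σ₁ * ρt k / (s k * s' k))
    (hν' : ∀ k, ν' k = μ₀ - (σ₀ / s k) * ρt k * (ν k - μ₁))
    -- (3) second IMF step
    (hρh : ∀ k, ρh k = imfUpdate (s' k) σ₁ ε t (ρ' k))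
    -- (4) IPF projection of the starting marginal onto N(μ₀, σ₀²)
    (hs1 : ∀ k, (s (k + 1)) ^ 2 = σ₁ ^ 2 * (1 - (ρh k) ^ 2 * (1 - σ₀ ^ 2 / (s' k) ^ 2)))
    (hρ1 : ∀ k, ρ (k + 1) = σ₀ * σ₁ * ρh k / (s' k * s (k + 1)))
    (hν1 : ∀ k, ν (k + 1) = μ₁ - (σ₁ / s' k) * ρh k * (ν' k - μ₀)) :
    (∀ k, 0 < s k ∧ 0 < s' k ∧ ρ k ∈ Set.Ioo (-1 : ℝ) 1 ∧ ρt k ∈ Set.Ioo (-1 : ℝ) 1 ∧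
      ρ' k ∈ Set.Ioo (-1 : ℝ) 1 ∧ ρh k ∈ Set.Ioo (-1 : ℝ) 1) ∧
    ∃ α β : ℝ, α ∈ Set.Ioo (0 : ℝ) 1 ∧ β ∈ Set.Ioo (0 : ℝ) 1 ∧
      (∀ k, |(s k) ^ 2 - σ₁ ^ 2| ≤ α ^ (2 * k) * |(s 0) ^ 2 - σ₁ ^ 2| ∧
        |ν k - μ₁| ≤ α ^ k * |ν 0 - μ₁| ∧
        |Xi (ρ k) σ₀ (s k) - 1 / ε| ≤ β ^ (2 * k) * |Xi (ρ 0) σ₀ (s 0) - 1 / ε|) ∧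
      Filter.Tendsto ρ Filter.atTop
        (nhds ((Real.sqrt (σ₀ ^ 2 * σ₁ ^ 2 + ε ^ 2 / 4) - ε / 2) / (σ₀ * σ₁))) := by
  set c := t * (1 - t) * ε
  set L := min (s 0 ^ 2) (σ₁ ^ 2)
  set A := max (s 0 ^ 2) (σ₁ ^ 2)
  set W := σ₀ ^ 2 + A + (σ₀ * σ₁) ^ 2 / L + σ₁ ^ 2
  have hL : 0 < L := lt_min (by positivity) (by positivity)
  have hc : 0 < c := mul_pos (mul_pos ht.1 (by linarith [ht.2])) hε
  have hW : 0 < W := by positivity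
  set α := W / (W + c)
  set β := W * (W + c) / (W * (W + c) + c ^ 2)
  have hα : α ∈ Set.Ioo 0 1 := ⟨by positivity, (div_lt_one (by positivity)).mpr (by linarith)⟩
  have hβ : β ∈ Set.Ioo 0 1 :=
    ⟨by positivity, (div_lt_one (by positivity)).mpr (by linarith [pow_pos hc 2])⟩
  have step (k : ℕ) (hs : 0 < s k) (hsI : s k ^ 2 ∈ Set.Icc L A) (hρ : |ρ k| < 1) :=
    ipmf_step_spec hσ₀ hσ₁ hε ht hL ⟨min_le_right _ _, le_max_right _ _⟩ le_rfl hs hsI hρ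
      (hs'nn k) (hsnn (k + 1)) (hρt k) (hs' k) (hρ' k) (hρh k) (hs1 k) (hρ1 k)
  have inv (k : ℕ) : 0 < s k ∧ s k ^ 2 ∈ Set.Icc L A ∧ |ρ k| < 1 := by
    induction k with
    | zero => exact ⟨hs0, ⟨min_le_left _ _, le_max_left _ _⟩, abs_lt.mpr hρ0⟩
    | succ k ih =>
      obtain ⟨⟨-, -, -, -, hs₁, hρ₁, hs₁I⟩, -⟩ := step k ih.1 ih.2.1 ih.2.2
      exact ⟨hs₁, hs₁I, hρ₁⟩
  have facts (k : ℕ) := step k (inv k).1 (inv k).2.1 (inv k).2.2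
  have hs_geom (k : ℕ) : |s k ^ 2 - σ₁ ^ 2| ≤ (α ^ 2) ^ k * |s 0 ^ 2 - σ₁ ^ 2| :=
    le_geom (u := fun k => |s k ^ 2 - σ₁ ^ 2|) (sq_nonneg α) k fun j _ => by
      obtain ⟨-, hρρ, hrec, -⟩ := facts j
      rw [hrec, abs_mul, abs_of_nonneg (sq_nonneg _), ← sq_abs]
      exact mul_le_mul_of_nonneg_right (pow_le_pow_left₀ (abs_nonneg _) hρρ 2) (abs_nonneg _)
  have hν_geom (k : ℕ) : |ν k - μ₁| ≤ α ^ k * |ν 0 - μ₁| :=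
    le_geom (u := fun k => |ν k - μ₁|) hα.1.le k fun j _ => by
      rw [show ν (j + 1) - μ₁ = ρ' j * ρh j * (ν j - μ₁) by rw [hν1, hν', hρ']; ring, abs_mul]
      exact mul_le_mul_of_nonneg_right (facts j).2.1 (abs_nonneg _)
  have hXi_geom (k : ℕ) :
      |Xi (ρ k) σ₀ (s k) - 1 / ε| ≤ (β ^ 2) ^ k * |Xi (ρ 0) σ₀ (s 0) - 1 / ε| :=
    le_geom (u := fun k => |Xi (ρ k) σ₀ (s k) - 1 / ε|) (sq_nonneg β) k fun j _ =>
      (facts j).2.2.2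
  have hs_lim : Tendsto s atTop (𝓝 σ₁) := by
    have := (tendsto_of_abs_sub_le_pow_mul (sq_nonneg α)
      (pow_lt_one₀ hα.1.le hα.2 two_ne_zero) hs_geom).sqrt
    simpa [Real.sqrt_sq (hsnn _), Real.sqrt_sq hσ₁.le] using this
  have hXi_lim := tendsto_of_abs_sub_le_pow_mul (sq_nonneg β)
    (pow_lt_one₀ hβ.1.le hβ.2 two_ne_zero) hXi_geom
  refine ⟨fun k => ?_, α, β, hα, hβ,
    fun k => ⟨by rw [pow_mul]; exact hs_geom k, hν_geom k, by rw [pow_mul]; exact hXi_geom k⟩,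
    tendsto_corr_of_tendsto_Xi hσ₀.ne' hσ₁.ne' hε (fun k => (inv k).1.ne') (fun k => (inv k).2.2)
      hs_lim hXi_lim⟩
  obtain ⟨⟨hs'k, hρtk, hρ'k, hρhk, -⟩, -⟩ := facts k
  exact ⟨(inv k).1, hs'k, abs_lt.mp (inv k).2.2, abs_lt.mp hρtk, abs_lt.mp hρ'k, abs_lt.mp hρhk⟩
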